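/- Let π ⋖ π' be a cover in Π(X) obtained by merging blocks B_i and B_j of π, and fix x ∈ B_i, y ∈ B_j. Then the map sending a minimal atomic decomposition S of π to S ∪ {π_{xy}} is an injection into the minimal atomic decompositions of π'; moreover, for distinct pairs (x,y) ≠ (x',y') with x,x' ∈ B_i and y,y' ∈ B_j, the images of the corresponding maps are disjoint. -/

import Mathlib

variable {X : Type*} [Fintype X] [DecidableEq X]

/-- The atom of the partition lattice whose only nonsingleton block is `{x, y}`. -/
def pairSetoid (x y : X) : Setoid X where
  r a b := a = b ∨ (a = x ∧ b = y) ∨ (a = y ∧ b = x)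
  iseqv := by
    refine ⟨fun a => Or.inl rfl, ?_, ?_⟩
    · intro a b h; tauto
    · intro a b c h1 h2; aesop

/-- `S` is an atomic decomposition of the partition `π`. -/
def IsAtomicDecomp (π : Setoid X) (S : Set (Setoid X)) : Prop :=
  (∀ a ∈ S, IsAtom a) ∧ sSup S = π

/-- `S` is a minimal atomic decomposition of `π`. -/
def IsMinAtomicDecomp (π : Setoid X) (S : Set (Setoid X)) : Prop :=
  IsAtomicDecomp π S ∧ ∀ T ⊂ S, ¬ IsAtomicDecomp π T

/-- `𝔑 π`: the number of minimal atomic decompositions of `π`. -/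
noncomputable def numMinDecomp (π : Setoid X) : ℕ :=
  {S | IsMinAtomicDecomp π S}.ncard

/-- The graph on `X` whose edges are the nonsingleton blocks of the atoms in `S`. -/
def atomGraph (S : Set (Setoid X)) : SimpleGraph X where
  Adj a b := a ≠ b ∧ pairSetoid a b ∈ S
  symm := by
    constructor
    intro a b ⟨h1, h2⟩
    refine ⟨h1.symm, ?_⟩
    have h : pairSetoid b a = pairSetoid a b := by
      apply Setoid.ext; intro u v
      show _ ∨ _ ↔ _ ∨ _; tauto
    rw [h]; exact h2
  loopless := by constructor; intro a ⟨h, _⟩; exact h rfl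

/-!
Write `a = π_{xy}`. As `x` and `y` lie in different blocks of `π` but in one block of `π'`,
the cover forces `π ⊔ a = π'`, and `a` lies in no decomposition of `π`. The key fact is
cancellation: if `q ≤ π` and `q ⊔ a = π ⊔ a` then `q = π`, because `(q ⊔ a) ⊓ π = q`. Hence a
proper subset `T` of `S ∪ {a}` with join `π'` must contain `a`, and `T \ {a}` is a proper subset
of `S` with join `π`, against minimality. Injectivity and disjointness of the images follow
because no decomposition of `π` contains an atom `π_{x'y'}` with `x' ∈ B_i`, `y' ∈ B_j`.
-/

theorem Setoid.not_rel_of_mem_classes {α : Type*} {r : Setoid α} {c d : Set α}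
    (hc : c ∈ r.classes) (hd : d ∈ r.classes) (hcd : c ≠ d) {u v : α} (hu : u ∈ c)
    (hv : v ∈ d) : ¬ r u v := by
  rw [r.rel_iff_exists_classes]
  rintro ⟨e, he, hue, hve⟩
  exact hcd ((eq_of_mem_classes hc hu he hue).trans (eq_of_mem_classes he hve hd hv))

section PairSetoid

variable {α : Type*} [DecidableEq α] {x y : α}

theorem pairSetoid_rel (x y : α) : pairSetoid x y x y :=
  Or.inr (Or.inl ⟨rfl, rfl⟩)

theorem pairSetoid_le_iff {r : Setoid α} : pairSetoid x y ≤ r ↔ r x y := by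
  refine ⟨fun h => h (pairSetoid_rel x y), fun h => ?_⟩
  rintro u v (rfl | ⟨rfl, rfl⟩ | ⟨rfl, rfl⟩)
  exacts [r.refl' u, h, r.symm' h]

theorem pairSetoid_isAtom (hxy : x ≠ y) : IsAtom (pairSetoid x y) := by
  refine ⟨fun h => hxy ?_, fun r hr => eq_bot_iff.2 fun u v huv => ?_⟩
  · exact pairSetoid_le_iff.1 h.le
  rcases hr.le huv with rfl | ⟨rfl, rfl⟩ | ⟨rfl, rfl⟩
  · exact rfl
  · exact absurd (pairSetoid_le_iff.2 huv) hr.not_ge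
  · exact absurd (pairSetoid_le_iff.2 (r.symm' huv)) hr.not_ge

theorem pairSetoid_eq_pairSetoid_iff {x' y' : α} (hxy : x ≠ y) :
    pairSetoid x y = pairSetoid x' y' ↔ x = x' ∧ y = y' ∨ x = y' ∧ y = x' := by
  constructor
  · intro h
    have h' : pairSetoid x' y' x y := h ▸ pairSetoid_rel x y
    exact h'.resolve_left hxy
  · rintro (⟨rfl, rfl⟩ | ⟨rfl, rfl⟩)
    · rfl
    · ext u v
      change _ ∨ _ ↔ _ ∨ _
      tauto

end PairSetoid

section SupPairSetoid

variable {α : Type*}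

/-- The join `q ⊔ π_{xy}`, described explicitly. -/
def supPair (q : Setoid α) (x y : α) : Setoid α where
  r u v := q u v ∨ (q u x ∧ q y v) ∨ (q u y ∧ q x v)
  iseqv := by
    refine ⟨fun u => Or.inl (q.refl' u), fun h => ?_, fun h h' => ?_⟩ <;>
      grind [Setoid.symm', Setoid.trans']

variable [DecidableEq α] {x y : α}

theorem sup_pairSetoid_le_supPair (q : Setoid α) (x y : α) :
    q ⊔ pairSetoid x y ≤ supPair q x y :=
  sup_le (fun _ _ h => Or.inl h) (pairSetoid_le_iff.2 (Or.inr (Or.inl ⟨q.refl' x, q.refl' y⟩)))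

theorem sup_pairSetoid_inf_eq {q r : Setoid α} (hq : q ≤ r) (hxy : ¬ r x y) :
    (q ⊔ pairSetoid x y) ⊓ r = q := by
  refine le_antisymm (fun u v huv => ?_) (le_inf le_sup_left hq)
  obtain ⟨hj, hr⟩ := Setoid.inf_iff_and.1 huv
  rcases sup_pairSetoid_le_supPair q x y hj with h | ⟨hux, hyv⟩ | ⟨huy, hxv⟩
  · exact h
  · exact absurd (r.trans' (r.symm' (hq hux)) (r.trans' hr (r.symm' (hq hyv)))) hxy
  · exact absurd (r.trans' (hq hxv) (r.trans' (r.symm' hr) (hq huy))) hxy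

theorem eq_of_sup_pairSetoid_eq_sup {q r : Setoid α} (hq : q ≤ r) (hxy : ¬ r x y)
    (h : q ⊔ pairSetoid x y = r ⊔ pairSetoid x y) : q = r := by
  rw [← sup_pairSetoid_inf_eq hq hxy, h, inf_eq_right.2 le_sup_left]

theorem sup_pairSetoid_eq_of_covBy {π π' : Setoid α} (hcov : π ⋖ π') (hπ : ¬ π x y)
    (hπ' : π' x y) : π ⊔ pairSetoid x y = π' :=
  (hcov.eq_or_eq le_sup_left (sup_le hcov.le (pairSetoid_le_iff.2 hπ'))).resolve_left
    fun h => hπ (pairSetoid_le_iff.1 (h ▸ le_sup_right))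

end SupPairSetoid

section AtomicDecomp

variable {α : Type*} {π a : Setoid α} {S : Set (Setoid α)}

theorem IsAtomicDecomp.le (hS : IsAtomicDecomp π S) (ha : a ∈ S) : a ≤ π :=
  hS.2 ▸ le_sSup ha

theorem IsMinAtomicDecomp.union_singleton (hS : IsMinAtomicDecomp π S) (ha : IsAtom a)
    (haπ : ¬ a ≤ π) (hcancel : ∀ q ≤ π, q ⊔ a = π ⊔ a → q = π) :
    IsMinAtomicDecomp (π ⊔ a) (S ∪ {a}) := by
  obtain ⟨⟨hatoms, hsup⟩, hmin⟩ := hS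
  refine ⟨⟨?_, by rw [sSup_union, sSup_singleton, hsup]⟩, fun T hT hTdec => ?_⟩
  · rintro b (hb | rfl)
    exacts [hatoms b hb, ha]
  have haT : a ∈ T := by
    by_contra haT
    have hTS : T ⊆ S := fun b hb => ((hT.subset hb).resolve_right fun h => haT (h ▸ hb))
    exact haπ (le_sup_right.trans (hTdec.2 ▸ hsup ▸ sSup_le_sSup hTS))
  have hTa : T \ {a} ∪ {a} = T := Set.sdiff_union_of_subset (Set.singleton_subset_iff.2 haT)
  have hTS : T \ {a} ⊂ S := Set.ssubset_iff_subset_ne.2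
    ⟨fun b hb => (hT.subset hb.1).resolve_right hb.2, fun h => hT.ne (by rw [← hTa, h])⟩
  refine hmin _ hTS ⟨fun b hb => hTdec.1 b hb.1, hcancel _ (hsup ▸ sSup_le_sSup hTS.subset) ?_⟩
  calc sSup (T \ {a}) ⊔ a = sSup (T \ {a} ∪ {a}) := by rw [sSup_union, sSup_singleton]
    _ = π ⊔ a := by rw [hTa, hTdec.2]

end AtomicDecomp

/-- Adding the atom `π_{xy}` (with `x ∈ Bi`, `y ∈ Bj`) to a minimal atomic
decomposition of `π` gives an injection into the minimal atomic decompositions of `π'`, and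
the images of these maps for distinct pairs `(x,y)` are disjoint. -/
theorem addAtom_injection (π π' : Setoid X) (Bi Bj : Set X)
    (hcov : π ⋖ π') (hBi : Bi ∈ π.classes) (hBj : Bj ∈ π.classes) (hne : Bi ≠ Bj)
    (hmerge : π'.classes = insert (Bi ∪ Bj) (π.classes \ {Bi, Bj}))
    (x y : X) (hx : x ∈ Bi) (hy : y ∈ Bj) :
    (∀ S, IsMinAtomicDecomp π S → IsMinAtomicDecomp π' (S ∪ {pairSetoid x y})) ∧
    (∀ S S', IsMinAtomicDecomp π S → IsMinAtomicDecomp π S' →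
      S ∪ {pairSetoid x y} = S' ∪ {pairSetoid x y} → S = S') ∧
    (∀ x' y' : X, x' ∈ Bi → y' ∈ Bj → (x, y) ≠ (x', y') →
      ∀ S S', IsMinAtomicDecomp π S → IsMinAtomicDecomp π S' →
        S ∪ {pairSetoid x y} ≠ S' ∪ {pairSetoid x' y'}) := by
  have hsep : ∀ u ∈ Bi, ∀ v ∈ Bj, ¬ π u v := fun u hu v hv =>
    Setoid.not_rel_of_mem_classes hBi hBj hne hu hv
  have hπ : ¬ π x y := hsep x hx y hy
  have hπ' : π' x y := π'.rel_iff_exists_classes.2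
    ⟨Bi ∪ Bj, hmerge ▸ Set.mem_insert _ _, Or.inl hx, Or.inr hy⟩
  have hnotMem : ∀ S, IsMinAtomicDecomp π S → pairSetoid x y ∉ S := fun S hS ha =>
    hπ (pairSetoid_le_iff.1 (hS.1.le ha))
  refine ⟨fun S hS => ?_, fun S S' hS hS' h => ?_, fun x' y' hx' hy' hne' S S' hS _ h => ?_⟩
  · rw [← sup_pairSetoid_eq_of_covBy hcov hπ hπ']
    exact hS.union_singleton (pairSetoid_isAtom fun h => hπ (h ▸ π.refl' x))
      (mt pairSetoid_le_iff.1 hπ) fun q hq => eq_of_sup_pairSetoid_eq_sup hq hπ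
  · rw [Set.union_singleton, Set.union_singleton] at h
    rw [← Set.insert_sdiff_self_of_notMem (hnotMem S hS), h,
      Set.insert_sdiff_self_of_notMem (hnotMem S' hS')]
  · have hmem : pairSetoid x' y' ∈ S ∪ {pairSetoid x y} := h ▸ Or.inr rfl
    rcases hmem with haS | hxy'
    · exact hsep x' hx' y' hy' (pairSetoid_le_iff.1 (hS.1.le haS))
    have hx'y' : x' ≠ y' := fun h => hsep x' hx' y' hy' (h ▸ π.refl' x')
    rcases (pairSetoid_eq_pairSetoid_iff hx'y').1 hxy' with ⟨rfl, rfl⟩ | ⟨hx'y, -⟩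
    · exact hne' rfl
    · exact hsep x' hx' y hy (hx'y ▸ π.refl' x')
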